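/- Let S′ be a set of 9 distinct points of P² such that no line contains 4 or more points of S′ and no conic (irreducible or reducible) contains 7 or more points of S′. If F and G are nonzero homogeneous polynomials of degree 3 in ℂ[X,Y,Z], both vanishing at every point of S′, and F and G have a common nonconstant factor in ℂ[X,Y,Z], then F and G are linearly dependent over ℂ (i.e., they define the same cubic curve). -/

import Mathlib

/-!
Write `F = h * a` and `G = h * b`. Factors of forms are forms, so `a` and `b` have the same degree
`e = 3 - deg h < 3`. The points of `S` off the curve `h = 0` lie on `a = 0`; comparing with the
bounds (at most `3k` points of `S` on a curve of degree `k < 3`) shows there are exactly `3e` of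
them and that `h = 0` contains some point `Q` of `S`. No nonzero form of degree `e` passes through
these `3e + 1` points, so `a(Q) • b - b(Q) • a = 0` with `a(Q), b(Q) ≠ 0`.
-/

namespace MvPolynomial

open Finset
open scoped LinearAlgebra.Projectivization Classical

variable {σ : Type*}

section Grading

variable {R : Type*} [CommRing R]

-- `scaleVars p = p(t • X) = ∑ₘ (homogeneousComponent m p) tᵐ`
noncomputable def scaleVars : MvPolynomial σ R →ₐ[R] Polynomial (MvPolynomial σ R) :=
  aeval fun i => Polynomial.C (X i) * Polynomial.X

lemma scaleVars_monomial (d : σ →₀ ℕ) (c : R) :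
    scaleVars (monomial d c) = Polynomial.C (monomial d c) * Polynomial.X ^ d.degree := by
  rw [scaleVars, aeval_monomial, monomial_eq, Finsupp.prod, Finsupp.prod, Finsupp.degree]
  simp_rw [mul_pow, ← Polynomial.C_pow]
  rw [Finset.prod_mul_distrib, ← map_prod, Finset.prod_pow_eq_pow_sum, map_mul,
    Polynomial.algebraMap_apply, algebraMap_eq, mul_assoc]
  rfl

lemma coeff_scaleVars (p : MvPolynomial σ R) (m : ℕ) :
    (scaleVars p).coeff m = homogeneousComponent m p := by
  induction p using MvPolynomial.induction_on' with
  | monomial d c =>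
    rw [scaleVars_monomial, Polynomial.coeff_C_mul_X_pow,
      homogeneousComponent_of_mem (isHomogeneous_monomial c rfl)]
  | add p q hp hq => simp only [map_add, Polynomial.coeff_add, hp, hq]

lemma coeff_eq_coeff_scaleVars (p : MvPolynomial σ R) (d : σ →₀ ℕ) :
    p.coeff d = ((scaleVars p).coeff d.degree).coeff d := by
  simp [coeff_scaleVars, coeff_homogeneousComponent]

lemma scaleVars_injective : Function.Injective (scaleVars : MvPolynomial σ R → _) := by
  intro p q h
  ext d
  rw [coeff_eq_coeff_scaleVars, coeff_eq_coeff_scaleVars q, h]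

lemma isHomogeneous_of_forall_coeff_scaleVars {p : MvPolynomial σ R} {n : ℕ}
    (h : ∀ m ≠ n, (scaleVars p).coeff m = 0) : p.IsHomogeneous n := by
  intro d hd
  by_contra hne
  rw [coeff_eq_coeff_scaleVars, h _ (by rwa [Finsupp.degree_eq_weight_one])] at hd
  exact hd (coeff_zero d)

lemma IsHomogeneous.scaleVars_eq {p : MvPolynomial σ R} {n : ℕ} (hp : p.IsHomogeneous n) :
    scaleVars p = Polynomial.C p * Polynomial.X ^ n := by
  ext1 m
  rw [coeff_scaleVars, Polynomial.coeff_C_mul_X_pow, homogeneousComponent_of_mem hp]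

-- The lowest and the highest powers of `t` in `p(t • X) * q(t • X) = (p * q) t ^ n` both add up
-- to `n`, so each factor contains a single power of `t`.
lemma IsHomogeneous.of_mul_left [IsDomain R] {p q : MvPolynomial σ R} {n : ℕ}
    (hpq : (p * q).IsHomogeneous n) (hp : p ≠ 0) (hq : q ≠ 0) :
    p.IsHomogeneous p.totalDegree := by
  have hψp : scaleVars p ≠ 0 := (map_ne_zero_iff _ scaleVars_injective).2 hp
  have hψq : scaleVars q ≠ 0 := (map_ne_zero_iff _ scaleVars_injective).2 hq
  have hψpq : scaleVars p * scaleVars q = Polynomial.monomial n (p * q) := by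
    rw [← map_mul, hpq.scaleVars_eq, Polynomial.C_mul_X_pow_eq_monomial]
  have hdeg : (scaleVars p).natDegree + (scaleVars q).natDegree = n := by
    rw [← Polynomial.natDegree_mul hψp hψq, hψpq,
      Polynomial.natDegree_monomial_eq _ (mul_ne_zero hp hq)]
  have htrail : (scaleVars p).natTrailingDegree + (scaleVars q).natTrailingDegree = n := by
    rw [← Polynomial.natTrailingDegree_mul hψp hψq, hψpq,
      Polynomial.natTrailingDegree_monomial (mul_ne_zero hp hq)]
  have hq_le := Polynomial.natTrailingDegree_le_natDegree (p := scaleVars q)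
  have hp_le := Polynomial.natTrailingDegree_le_natDegree (p := scaleVars p)
  have hhom : p.IsHomogeneous (scaleVars p).natDegree := by
    refine isHomogeneous_of_forall_coeff_scaleVars fun m hm => ?_
    rcases hm.lt_or_gt with hlt | hgt
    · exact Polynomial.coeff_eq_zero_of_lt_natTrailingDegree (by omega)
    · exact Polynomial.coeff_eq_zero_of_natDegree_lt hgt
  rwa [hhom.totalDegree hp]

lemma IsHomogeneous.of_mul_right [IsDomain R] {p q : MvPolynomial σ R} {n : ℕ}
    (hpq : (p * q).IsHomogeneous n) (hp : p ≠ 0) (hq : q ≠ 0) :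
    q.IsHomogeneous q.totalDegree :=
  (mul_comm p q ▸ hpq).of_mul_left hq hp

end Grading

variable {K : Type*} [Field K]

noncomputable def pointsOn (S : Finset (ℙ K (σ → K))) (p : MvPolynomial σ K) :
    Finset (ℙ K (σ → K)) :=
  S.filter fun x => eval x.rep p = 0

lemma mem_pointsOn {S : Finset (ℙ K (σ → K))} {p : MvPolynomial σ K} {x : ℙ K (σ → K)} :
    x ∈ pointsOn S p ↔ x ∈ S ∧ eval x.rep p = 0 := by
  simp [pointsOn]

lemma coe_pointsOn (S : Finset (ℙ K (σ → K))) (p : MvPolynomial σ K) :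
    (pointsOn S p : Set (ℙ K (σ → K))) = {x ∈ (S : Set (ℙ K (σ → K))) | eval x.rep p = 0} := by
  ext x
  simp [mem_pointsOn]

lemma pointsOn_subset (S : Finset (ℙ K (σ → K))) (p : MvPolynomial σ K) : pointsOn S p ⊆ S :=
  fun _ hx => (mem_pointsOn.1 hx).1

lemma pointsOn_eq_empty_of_isHomogeneous_zero (S : Finset (ℙ K (σ → K)))
    {p : MvPolynomial σ K} (hp : p ≠ 0) (hp0 : p.IsHomogeneous 0) : pointsOn S p = ∅ := by
  obtain ⟨c, rfl⟩ : ∃ c, p = C c :=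
    ⟨_, totalDegree_eq_zero_iff_eq_C.1 ((totalDegree_zero_iff_isHomogeneous σ).2 hp0)⟩
  have hc : c ≠ 0 := by rintro rfl; exact hp C_0
  ext x
  simp [mem_pointsOn, hc]

lemma eval_eq_zero_of_mem_sdiff_pointsOn {S : Finset (ℙ K (σ → K))} {h a : MvPolynomial σ K}
    (hv : ∀ x ∈ S, eval x.rep (h * a) = 0) : ∀ x ∈ S \ pointsOn S h, eval x.rep a = 0 := by
  intro x hx
  rw [mem_sdiff, mem_pointsOn] at hx
  have := hv x hx.1
  rw [map_mul] at this
  exact (mul_eq_zero.1 this).resolve_left fun h0 => hx.2 ⟨hx.1, h0⟩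

lemma exists_eq_smul_of_eval_injective {T : Set (ℙ K (σ → K))} {Q : ℙ K (σ → K)} {e : ℕ}
    (huniq : ∀ p : MvPolynomial σ K, p.IsHomogeneous e → (∀ x ∈ T, eval x.rep p = 0) →
      eval Q.rep p = 0 → p = 0)
    {a b : MvPolynomial σ K} (ha : a.IsHomogeneous e) (hb : b.IsHomogeneous e)
    (ha0 : a ≠ 0) (hb0 : b ≠ 0) (haT : ∀ x ∈ T, eval x.rep a = 0)
    (hbT : ∀ x ∈ T, eval x.rep b = 0) :
    ∃ c : K, c ≠ 0 ∧ b = c • a := by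
  have haQ : eval Q.rep a ≠ 0 := fun h0 => ha0 (huniq a ha haT h0)
  have hbQ : eval Q.rep b ≠ 0 := fun h0 => hb0 (huniq b hb hbT h0)
  have hcomb : eval Q.rep a • b - eval Q.rep b • a = 0 := by
    refine huniq _ (Submodule.sub_mem (homogeneousSubmodule σ K e)
      (Submodule.smul_mem _ _ hb) (Submodule.smul_mem _ _ ha))
      (fun x hx => by simp [haT x hx, hbT x hx]) (by simp [mul_comm])
  refine ⟨eval Q.rep b / eval Q.rep a, div_ne_zero hbQ haQ, ?_⟩
  rw [div_eq_inv_mul, mul_smul, ← sub_eq_zero.1 hcomb, inv_smul_smul₀ haQ]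

def CardPointsOnLe (S : Finset (ℙ K (σ → K))) (m n : ℕ) : Prop :=
  ∀ k < n, ∀ p : MvPolynomial σ K, p ≠ 0 → p.IsHomogeneous k → #(pointsOn S p) ≤ m * k

section Counting

variable {S : Finset (ℙ K (σ → K))} {m n : ℕ}

lemma card_pointsOn_le (hS : #S = m * n) (hS' : CardPointsOnLe S m n)
    {k : ℕ} (hk : k ≤ n) {p : MvPolynomial σ K} (hp : p ≠ 0) (hpk : p.IsHomogeneous k) :
    #(pointsOn S p) ≤ m * k := by
  rcases hk.lt_or_eq with hlt | rfl
  · exact hS' k hlt p hp hpk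
  · exact hS ▸ card_le_card (pointsOn_subset S p)

-- The bounds `m * d` on `h = 0` and `m * e` off it (through `a`) add up to `#S`, so both are
-- attained; any `Q` on `h = 0` then brings the points off `h = 0` to `m * e + 1`.
lemma exists_mem_pointsOn_forall_eq_zero (hm : 0 < m) (hS : #S = m * n) (hS' : CardPointsOnLe S m n)
    {h a : MvPolynomial σ K} {d e : ℕ} (hde : d + e = n) (hd : 0 < d)
    (hh : h.IsHomogeneous d) (hh0 : h ≠ 0) (ha : a.IsHomogeneous e) (ha0 : a ≠ 0)
    (haT : ∀ x ∈ S \ pointsOn S h, eval x.rep a = 0) :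
    ∃ Q ∈ pointsOn S h, ∀ p : MvPolynomial σ K, p.IsHomogeneous e →
      (∀ x ∈ S \ pointsOn S h, eval x.rep p = 0) → eval Q.rep p = 0 → p = 0 := by
  have hsplit : m * n = m * d + m * e := by rw [← hde, mul_add]
  have hmd : 0 < m * d := Nat.mul_pos hm hd
  have hcompl : #(S \ pointsOn S h) = m * n - #(pointsOn S h) := by
    rw [card_sdiff_of_subset (pointsOn_subset S h), hS]
  have hh_le := card_pointsOn_le hS hS' (by omega) hh0 hh
  have hsub_of_vanish : ∀ p : MvPolynomial σ K, (∀ x ∈ S \ pointsOn S h, eval x.rep p = 0) →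
      S \ pointsOn S h ⊆ pointsOn S p := fun p hp x hx =>
    mem_pointsOn.2 ⟨(mem_sdiff.1 hx).1, hp x hx⟩
  have ha_le := (card_le_card (hsub_of_vanish a haT)).trans
    (card_pointsOn_le hS hS' (by omega) ha0 ha)
  obtain ⟨Q, hQ⟩ : (pointsOn S h).Nonempty := card_pos.1 (by omega)
  refine ⟨Q, hQ, fun p hp hpT hpQ => ?_⟩
  by_contra hp0
  have hins : insert Q (S \ pointsOn S h) ⊆ pointsOn S p := insert_subset
    (mem_pointsOn.2 ⟨(mem_pointsOn.1 hQ).1, hpQ⟩) (hsub_of_vanish p hpT)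
  have := card_le_card hins
  rw [card_insert_of_notMem fun hQ' => (mem_sdiff.1 hQ').2 hQ] at this
  have := card_pointsOn_le hS hS' (by omega) hp0 hp
  omega

theorem exists_eq_smul_of_dvd_of_dvd (hm : 0 < m) (hS : #S = m * n) (hS' : CardPointsOnLe S m n)
    {F G h : MvPolynomial σ K} (hF : F ≠ 0) (hG : G ≠ 0)
    (hFh : F.IsHomogeneous n) (hGh : G.IsHomogeneous n)
    (hFv : ∀ x ∈ S, eval x.rep F = 0) (hGv : ∀ x ∈ S, eval x.rep G = 0)
    (hdeg : 0 < h.totalDegree) (hhF : h ∣ F) (hhG : h ∣ G) :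
    ∃ c : K, c ≠ 0 ∧ G = c • F := by
  obtain ⟨a, rfl⟩ := hhF
  obtain ⟨b, rfl⟩ := hhG
  have hh0 := left_ne_zero_of_mul hF
  have ha0 := right_ne_zero_of_mul hF
  have hb0 := right_ne_zero_of_mul hG
  have hh := hFh.of_mul_left hh0 ha0
  have ha := hFh.of_mul_right hh0 ha0
  have hb := hGh.of_mul_right hh0 hb0
  have hde : h.totalDegree + a.totalDegree = n := (hh.mul ha).inj_right hFh hF
  have hbe : b.totalDegree = a.totalDegree := by
    have := (hh.mul hb).inj_right hGh hG
    omega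
  rw [hbe] at hb
  obtain ⟨Q, -, huniq⟩ := exists_mem_pointsOn_forall_eq_zero hm hS hS' hde hdeg hh hh0 ha ha0
    (eval_eq_zero_of_mem_sdiff_pointsOn hFv)
  obtain ⟨c, hc, rfl⟩ := exists_eq_smul_of_eval_injective huniq ha hb ha0 hb0
    (eval_eq_zero_of_mem_sdiff_pointsOn hFv) (eval_eq_zero_of_mem_sdiff_pointsOn hGv)
  exact ⟨c, hc, mul_smul_comm c h a⟩

end Counting

end MvPolynomial

open MvPolynomial

theorem cubics_with_common_factor_through_nine_points_are_proportional
    (S : Finset (Projectivization ℂ (Fin 3 → ℂ))) (hS : S.card = 9)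
    (hline : ∀ l : MvPolynomial (Fin 3) ℂ, l ≠ 0 → l.IsHomogeneous 1 →
      {x ∈ (S : Set (Projectivization ℂ (Fin 3 → ℂ))) | eval x.rep l = 0}.ncard ≤ 3)
    (hconic : ∀ c : MvPolynomial (Fin 3) ℂ, c ≠ 0 → c.IsHomogeneous 2 →
      {x ∈ (S : Set (Projectivization ℂ (Fin 3 → ℂ))) | eval x.rep c = 0}.ncard ≤ 6)
    (F G : MvPolynomial (Fin 3) ℂ) (hF : F ≠ 0) (hG : G ≠ 0)
    (hFh : F.IsHomogeneous 3) (hGh : G.IsHomogeneous 3)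
    (hFv : ∀ x ∈ S, eval (Projectivization.rep x) F = 0)
    (hGv : ∀ x ∈ S, eval (Projectivization.rep x) G = 0)
    (h : MvPolynomial (Fin 3) ℂ) (hdeg : 0 < h.totalDegree)
    (hhF : h ∣ F) (hhG : h ∣ G) :
    ∃ c : ℂ, c ≠ 0 ∧ G = c • F := by
  have hcard : ∀ p : MvPolynomial (Fin 3) ℂ,
      {x ∈ (S : Set (Projectivization ℂ (Fin 3 → ℂ))) | eval x.rep p = 0}.ncard
        = (pointsOn S p).card := fun p => by
    rw [← coe_pointsOn, Set.ncard_coe_finset]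
  refine exists_eq_smul_of_dvd_of_dvd (m := 3) (by norm_num) hS ?_ hF hG hFh hGh hFv hGv hdeg
    hhF hhG
  intro k hk p hp hpk
  interval_cases k
  · simp [pointsOn_eq_empty_of_isHomogeneous_zero S hp hpk]
  · exact hcard p ▸ hline p hp hpk
  · exact hcard p ▸ hconic p hp hpk
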